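/- Existence of a topmost rightmost maximal cut-segment: if Δ is a non-normal derivation in a system of grounding Σ, then there is a topmost maximal cut-segment σ of Δ such that for no cut-segment σ* in Δ is it the case that μ(σ*) = μ(σ) and the lower edge of σ is side-connected with an occurrence in σ* or with a formula occurrence in Δ standing below the lower edge of σ*. -/

import Mathlib

/-!  A formalization of d'Aragona's systems of grounding (Prawitz's theory of grounds).

* `LTerm`, `LFormula` : terms and formulas of the first-order background language `L`
  (with an absurdity constant `bot`).
* `GTerm` : typed terms of the (enriched, possibly expanded) Gentzen language of grounding:
  individual constants `konst i` naming closed atomic derivations, typed ground-variables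
  `xi α i` (ξ^α_i), applied functional variables `fh α x i t` (h^α_{x,i}(t)) and
  `ff α i T` (f^α_i(T)), the primitive operational symbols `andI, orI, impI, allI, exI`,
  the non-primitive ones `andE, orE, impE, allE, exE, botE`, and (for expansions by further
  non-primitive operational symbols) `op i` together with application `app`.
* `GForm` : formulas of the enriched language: `gr T α` ("T : α", i.e. Gr(T,α)),
  `equiv T U` ("T ≡ U"), `botG` (⊥^G) and the logical constants ×, +, ⊃, Π, 𝔈
  (`conj, disj, impl, pi, exi`), quantifying over `GVar`s (individual, typed, functional).
* `Valid base R Γ t` : the tree `t` is a correct derivation, from open assumptions in `Γ`,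
  in the system of grounding determined by the atomic base (represented by the conclusion
  assignment `base : ℕ → LFormula` for the constants `konst i`) and by the set `R` of
  characteristic rules (rewrite equations for the additional non-primitive symbols).
  With `R = ∅` this is exactly the system GG of d'Aragona.
* `Deriv base R Γ A` : derivability in the system; `Deriv base ∅ Γ A` is `Γ ⊢_GG A`.
-/

namespace Grounding

noncomputable section
open Classical

/-! ### The background language L -/

/-- Terms of the first-order background language. -/
inductive LTerm : Type
  | var : ℕ → LTerm
  | func : ℕ → List LTerm → LTerm

/-- `x` occurs (free) in the background term `t`. -/
inductive LTerm.FVar : ℕ → LTerm → Prop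
  | var (x : ℕ) : LTerm.FVar x (.var x)
  | func {x f : ℕ} {args : List LTerm} {t : LTerm} :
      t ∈ args → LTerm.FVar x t → LTerm.FVar x (.func f args)

/-- The set of variables of a background term. -/
def LTerm.fv (t : LTerm) : Set ℕ := {x | LTerm.FVar x t}

/-- Substitution `t[u/x]` in background terms. -/
def LTerm.subst : LTerm → ℕ → LTerm → LTerm
  | .var y, x, u => if y = x then u else .var y
  | .func f args, x, u => .func f (args.attach.map fun a => a.1.subst x u)
termination_by t _ _ => sizeOf t
decreasing_by
  have := List.sizeOf_lt_of_mem a.2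
  simp only [LTerm.func.sizeOf_spec]
  omega

/-- Formulas of the first-order background language, with absurdity constant `bot`. -/
inductive LFormula : Type
  | atom : ℕ → List LTerm → LFormula
  | bot : LFormula
  | and : LFormula → LFormula → LFormula
  | or : LFormula → LFormula → LFormula
  | imp : LFormula → LFormula → LFormula
  | all : ℕ → LFormula → LFormula
  | ex : ℕ → LFormula → LFormula

/-- Free variables of a background formula. -/
def LFormula.fv : LFormula → Set ℕ
  | .atom _ args => {x | ∃ t ∈ args, x ∈ t.fv}
  | .bot => ∅
  | .and a b => a.fv ∪ b.fv
  | .or a b => a.fv ∪ b.fv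
  | .imp a b => a.fv ∪ b.fv
  | .all y a => a.fv \ {y}
  | .ex y a => a.fv \ {y}

/-- Substitution `α[t/x]` in background formulas (no capture-renaming; use `freeFor`). -/
def LFormula.subst : LFormula → ℕ → LTerm → LFormula
  | .atom r args, x, t => .atom r (args.map fun u => u.subst x t)
  | .bot, _, _ => .bot
  | .and a b, x, t => .and (a.subst x t) (b.subst x t)
  | .or a b, x, t => .or (a.subst x t) (b.subst x t)
  | .imp a b, x, t => .imp (a.subst x t) (b.subst x t)
  | .all y a, x, t => if y = x then .all y a else .all y (a.subst x t)
  | .ex y a, x, t => if y = x then .ex y a else .ex y (a.subst x t)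

/-- `t` is free for `x` in `α`. -/
def LTerm.freeFor (t : LTerm) (x : ℕ) : LFormula → Prop
  | .atom _ _ => True
  | .bot => True
  | .and a b => t.freeFor x a ∧ t.freeFor x b
  | .or a b => t.freeFor x a ∧ t.freeFor x b
  | .imp a b => t.freeFor x a ∧ t.freeFor x b
  | .all y a => (x = y ∨ x ∉ a.fv) ∨ (y ∉ t.fv ∧ t.freeFor x a)
  | .ex y a => (x = y ∨ x ∉ a.fv) ∨ (y ∉ t.fv ∧ t.freeFor x a)

/-- The standard logical-complexity measure `k¹` of a background formula. -/
def LFormula.compl : LFormula → ℕ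
  | .atom _ _ => 0
  | .bot => 0
  | .and a b => max a.compl b.compl + 1
  | .or a b => max a.compl b.compl + 1
  | .imp a b => max a.compl b.compl + 1
  | .all _ a => a.compl + 1
  | .ex _ a => a.compl + 1

/-! ### Terms of the (enriched, possibly expanded) language of grounding -/

/-- Typed terms of the language of grounding. -/
inductive GTerm : Type
  | konst : ℕ → GTerm                                -- δ_i, naming closed atomic derivations
  | xi : LFormula → ℕ → GTerm                        -- typed ground-variables ξ^α_i
  | fh : LFormula → ℕ → ℕ → LTerm → GTerm            -- applied functional variables h^α_{x,i}(t)
  | ff : LFormula → ℕ → GTerm → GTerm                -- applied functional variables f^α_i(T)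
  | op : ℕ → GTerm                                   -- additional non-primitive operational symbols
  | app : GTerm → GTerm → GTerm                      -- application (for the additional symbols)
  | andI : GTerm → GTerm → GTerm                     -- ∧I(T,U)
  | orI : Bool → LFormula → GTerm → GTerm            -- ∨I[α_i ▷ α₁∨α₂]; `true` = left injection
  | impI : LFormula → ℕ → GTerm → GTerm              -- →I ξ^α_i (T), binding ξ^α_i
  | allI : ℕ → GTerm → GTerm                         -- ∀I x (T), binding x
  | exI : ℕ → LTerm → LFormula → GTerm → GTerm       -- ∃I[α(t/x) ▷ ∃x α](T)
  | andE : Bool → GTerm → GTerm                      -- ∧E,i(T), `true` = first projection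
  | orE : LFormula → LFormula → ℕ → ℕ → GTerm → GTerm → GTerm → GTerm
      -- ∨E ξ^α_i ξ^β_j (T,U,Z), binding ξ^α_i in U and ξ^β_j in Z
  | impE : GTerm → GTerm → GTerm                     -- →E(T,U)
  | allE : LTerm → GTerm → GTerm                     -- ∀E[∀xα ▷ α(t/x)](T)
  | exE : ℕ → LFormula → ℕ → GTerm → GTerm → GTerm   -- ∃E x ξ^{α}_j (T,U), binding x, ξ^α_j in U
  | botE : LFormula → GTerm → GTerm                  -- ⊥_α(T)

/-- Variables of the enriched language: individual, typed and functional. -/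
inductive GVar : Type
  | ind : ℕ → GVar
  | xi : LFormula → ℕ → GVar
  | fh : LFormula → ℕ → ℕ → GVar
  | ff : LFormula → ℕ → GVar

/-- Free variables (of all three kinds) of a grounding term. -/
def GTerm.fvar : GTerm → Set GVar
  | .konst _ => ∅
  | .xi γ j => {GVar.xi γ j} ∪ (GVar.ind '' γ.fv)
  | .fh γ y j t => {GVar.fh γ y j} ∪ (GVar.ind '' (t.fv ∪ (γ.fv \ {y})))
  | .ff γ j T => {GVar.ff γ j} ∪ (GVar.ind '' γ.fv) ∪ T.fvar
  | .op _ => ∅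
  | .app T U => T.fvar ∪ U.fvar
  | .andI T U => T.fvar ∪ U.fvar
  | .orI _ γ T => (GVar.ind '' γ.fv) ∪ T.fvar
  | .impI γ j T => (GVar.ind '' γ.fv) ∪ (T.fvar \ {GVar.xi γ j})
  | .allI y T => T.fvar \ {GVar.ind y}
  | .exI y t γ T => (GVar.ind '' (t.fv ∪ (γ.fv \ {y}))) ∪ T.fvar
  | .andE _ T => T.fvar
  | .orE γ δ i j T V W => T.fvar ∪ (V.fvar \ {GVar.xi γ i}) ∪ (W.fvar \ {GVar.xi δ j})
  | .impE T U => T.fvar ∪ U.fvar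
  | .allE t T => (GVar.ind '' t.fv) ∪ T.fvar
  | .exE y γ j T U => T.fvar ∪ ((U.fvar \ {GVar.xi γ j}) \ {GVar.ind y})
  | .botE γ T => (GVar.ind '' γ.fv) ∪ T.fvar

/-- `v` is a functional variable. -/
def GVar.isFun : GVar → Prop
  | .fh _ _ _ => True
  | .ff _ _ => True
  | _ => False

/-- The term contains no (free or applied) functional variables. -/
def GTerm.noFunVar (T : GTerm) : Prop := ∀ v ∈ T.fvar, ¬ v.isFun

/-- `T` is a term of the basic (non-enriched) language of grounding `Gen`
(no functional variables, no additional operational symbols). -/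
def GTerm.isGen : GTerm → Prop
  | .konst _ => True
  | .xi _ _ => True
  | .fh _ _ _ _ => False
  | .ff _ _ _ => False
  | .op _ => False
  | .app _ _ => False
  | .andI T U => T.isGen ∧ U.isGen
  | .orI _ _ T => T.isGen
  | .impI _ _ T => T.isGen
  | .allI _ T => T.isGen
  | .exI _ _ _ T => T.isGen
  | .andE _ T => T.isGen
  | .orE _ _ _ _ T U Z => T.isGen ∧ U.isGen ∧ Z.isGen
  | .impE T U => T.isGen ∧ U.isGen
  | .allE _ T => T.isGen
  | .exE _ _ _ T U => T.isGen ∧ U.isGen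
  | .botE _ T => T.isGen

/-- Substitution of the individual variable `x` by the background term `u` in a grounding term. -/
def GTerm.substInd (x : ℕ) (u : LTerm) : GTerm → GTerm
  | .konst i => .konst i
  | .xi γ j => .xi (γ.subst x u) j
  | .fh γ y j t => .fh (if y = x then γ else γ.subst x u) y j (t.subst x u)
  | .ff γ j T => .ff (γ.subst x u) j (T.substInd x u)
  | .op i => .op i
  | .app T U => .app (T.substInd x u) (U.substInd x u)
  | .andI T U => .andI (T.substInd x u) (U.substInd x u)
  | .orI b γ T => .orI b (γ.subst x u) (T.substInd x u)
  | .impI γ j T => .impI (γ.subst x u) j (T.substInd x u)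
  | .allI y T => if y = x then .allI y T else .allI y (T.substInd x u)
  | .exI y t γ T => .exI y (t.subst x u) (if y = x then γ else γ.subst x u) (T.substInd x u)
  | .andE b T => .andE b (T.substInd x u)
  | .orE γ δ i j T V W =>
      .orE (γ.subst x u) (δ.subst x u) i j (T.substInd x u) (V.substInd x u) (W.substInd x u)
  | .impE T U => .impE (T.substInd x u) (U.substInd x u)
  | .allE t T => .allE (t.subst x u) (T.substInd x u)
  | .exE y γ j T U =>
      .exE y (if y = x then γ else γ.subst x u) j (T.substInd x u)
        (if y = x then U else U.substInd x u)
  | .botE γ T => .botE (γ.subst x u) (T.substInd x u)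

/-- Substitution of the typed variable ξ^α_i by the term `W` in a grounding term. -/
def GTerm.substXi : GTerm → LFormula → ℕ → GTerm → GTerm
  | .konst k, _, _, _ => .konst k
  | .xi γ j, α, i, W => if γ = α ∧ j = i then W else .xi γ j
  | .fh γ y j t, _, _, _ => .fh γ y j t
  | .ff γ j T, α, i, W => .ff γ j (T.substXi α i W)
  | .op k, _, _, _ => .op k
  | .app T U, α, i, W => .app (T.substXi α i W) (U.substXi α i W)
  | .andI T U, α, i, W => .andI (T.substXi α i W) (U.substXi α i W)
  | .orI b γ T, α, i, W => .orI b γ (T.substXi α i W)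
  | .impI γ j T, α, i, W => if γ = α ∧ j = i then .impI γ j T else .impI γ j (T.substXi α i W)
  | .allI y T, α, i, W => .allI y (T.substXi α i W)
  | .exI y t γ T, α, i, W => .exI y t γ (T.substXi α i W)
  | .andE b T, α, i, W => .andE b (T.substXi α i W)
  | .orE γ δ k l T V Z, α, i, W =>
      .orE γ δ k l (T.substXi α i W)
        (if γ = α ∧ k = i then V else V.substXi α i W)
        (if δ = α ∧ l = i then Z else Z.substXi α i W)
  | .impE T U, α, i, W => .impE (T.substXi α i W) (U.substXi α i W)
  | .allE t T, α, i, W => .allE t (T.substXi α i W)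
  | .exE y γ j T U, α, i, W =>
      .exE y γ j (T.substXi α i W) (if γ = α ∧ j = i then U else U.substXi α i W)
  | .botE γ T, α, i, W => .botE γ (T.substXi α i W)

/-- Substitution of the functional variable h^β_{x,m} by the term `U`
(occurrences `h^β_{x,m}(t)` become `U[t/x]`). -/
def GTerm.substFH : GTerm → LFormula → ℕ → ℕ → GTerm → GTerm
  | .konst i, _, _, _, _ => .konst i
  | .xi γ j, _, _, _, _ => .xi γ j
  | .fh γ y j t, β, x, m, U => if γ = β ∧ y = x ∧ j = m then U.substInd x t else .fh γ y j t
  | .ff γ j T, β, x, m, U => .ff γ j (T.substFH β x m U)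
  | .op i, _, _, _, _ => .op i
  | .app T V, β, x, m, U => .app (T.substFH β x m U) (V.substFH β x m U)
  | .andI T V, β, x, m, U => .andI (T.substFH β x m U) (V.substFH β x m U)
  | .orI b γ T, β, x, m, U => .orI b γ (T.substFH β x m U)
  | .impI γ j T, β, x, m, U => .impI γ j (T.substFH β x m U)
  | .allI y T, β, x, m, U => .allI y (T.substFH β x m U)
  | .exI y t γ T, β, x, m, U => .exI y t γ (T.substFH β x m U)
  | .andE b T, β, x, m, U => .andE b (T.substFH β x m U)
  | .orE γ δ k l T V Z, β, x, m, U =>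
      .orE γ δ k l (T.substFH β x m U) (V.substFH β x m U) (Z.substFH β x m U)
  | .impE T V, β, x, m, U => .impE (T.substFH β x m U) (V.substFH β x m U)
  | .allE t T, β, x, m, U => .allE t (T.substFH β x m U)
  | .exE y γ j T V, β, x, m, U => .exE y γ j (T.substFH β x m U) (V.substFH β x m U)
  | .botE γ T, β, x, m, U => .botE γ (T.substFH β x m U)

/-- Substitution of the functional variable f^β_m by the term `U`
(whole applications `f^β_m(Z)` become `U`). -/
def GTerm.substFF : GTerm → LFormula → ℕ → GTerm → GTerm
  | .konst i, _, _, _ => .konst i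
  | .xi γ j, _, _, _ => .xi γ j
  | .fh γ y j t, _, _, _ => .fh γ y j t
  | .ff γ j T, β, m, U => if γ = β ∧ j = m then U else .ff γ j (T.substFF β m U)
  | .op i, _, _, _ => .op i
  | .app T V, β, m, U => .app (T.substFF β m U) (V.substFF β m U)
  | .andI T V, β, m, U => .andI (T.substFF β m U) (V.substFF β m U)
  | .orI b γ T, β, m, U => .orI b γ (T.substFF β m U)
  | .impI γ j T, β, m, U => .impI γ j (T.substFF β m U)
  | .allI y T, β, m, U => .allI y (T.substFF β m U)
  | .exI y t γ T, β, m, U => .exI y t γ (T.substFF β m U)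
  | .andE b T, β, m, U => .andE b (T.substFF β m U)
  | .orE γ δ k l T V Z, β, m, U =>
      .orE γ δ k l (T.substFF β m U) (V.substFF β m U) (Z.substFF β m U)
  | .impE T V, β, m, U => .impE (T.substFF β m U) (V.substFF β m U)
  | .allE t T, β, m, U => .allE t (T.substFF β m U)
  | .exE y γ j T V, β, m, U => .exE y γ j (T.substFF β m U) (V.substFF β m U)
  | .botE γ T, β, m, U => .botE γ (T.substFF β m U)

/-! ### Formulas of the enriched language of grounding -/

/-- Formulas of the enriched language of grounding: `gr T α` is the atomic formula
`Gr(T, α)` (written `T : α`), `equiv T U` is `T ≡ U`, `botG` is ⊥^G, and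
`conj, disj, impl, pi, exi` are ×, +, ⊃, Π, 𝔈. -/
inductive GForm : Type
  | gr : GTerm → LFormula → GForm
  | equiv : GTerm → GTerm → GForm
  | botG : GForm
  | conj : GForm → GForm → GForm
  | disj : GForm → GForm → GForm
  | impl : GForm → GForm → GForm
  | pi : GVar → GForm → GForm
  | exi : GVar → GForm → GForm

/-- Bi-implication `A ⇔ B`, an abbreviation for `(A ⊃ B) × (B ⊃ A)`. -/
def gIff (A B : GForm) : GForm := .conj (.impl A B) (.impl B A)

/-- Negation `¬^G A`, an abbreviation for `A ⊃ ⊥^G`. -/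
def gNeg (A : GForm) : GForm := .impl A .botG

/-- Free variables of a formula of the enriched language. -/
def GForm.fvar : GForm → Set GVar
  | .gr T α => T.fvar ∪ (GVar.ind '' α.fv)
  | .equiv T U => T.fvar ∪ U.fvar
  | .botG => ∅
  | .conj A B => A.fvar ∪ B.fvar
  | .disj A B => A.fvar ∪ B.fvar
  | .impl A B => A.fvar ∪ B.fvar
  | .pi v A => A.fvar \ {v}
  | .exi v A => A.fvar \ {v}

/-- Substitution of `x` by `u` in the type annotations of a variable. -/
def GVar.substInd (x : ℕ) (u : LTerm) : GVar → GVar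
  | .ind y => .ind y
  | .xi γ j => .xi (γ.subst x u) j
  | .fh γ y j => .fh (if y = x then γ else γ.subst x u) y j
  | .ff γ j => .ff (γ.subst x u) j

/-- Substitution of the individual variable `x` by `u` in a formula. -/
def GForm.substInd (x : ℕ) (u : LTerm) : GForm → GForm
  | .gr T α => .gr (T.substInd x u) (α.subst x u)
  | .equiv T U => .equiv (T.substInd x u) (U.substInd x u)
  | .botG => .botG
  | .conj A B => .conj (A.substInd x u) (B.substInd x u)
  | .disj A B => .disj (A.substInd x u) (B.substInd x u)
  | .impl A B => .impl (A.substInd x u) (B.substInd x u)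
  | .pi v A => if v = .ind x then .pi v A else .pi (v.substInd x u) (A.substInd x u)
  | .exi v A => if v = .ind x then .exi v A else .exi (v.substInd x u) (A.substInd x u)

/-- Substitution of the typed variable ξ^α_i by the term `W` in a formula. -/
def GForm.substXi (α : LFormula) (i : ℕ) (W : GTerm) : GForm → GForm
  | .gr T γ => .gr (T.substXi α i W) γ
  | .equiv T U => .equiv (T.substXi α i W) (U.substXi α i W)
  | .botG => .botG
  | .conj A B => .conj (A.substXi α i W) (B.substXi α i W)
  | .disj A B => .disj (A.substXi α i W) (B.substXi α i W)
  | .impl A B => .impl (A.substXi α i W) (B.substXi α i W)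
  | .pi v A => if v = .xi α i then .pi v A else .pi v (A.substXi α i W)
  | .exi v A => if v = .xi α i then .exi v A else .exi v (A.substXi α i W)

/-- Substitution of the functional variable h^β_{x,m} by the term `U` in a formula. -/
def GForm.substFH (β : LFormula) (x m : ℕ) (U : GTerm) : GForm → GForm
  | .gr T γ => .gr (T.substFH β x m U) γ
  | .equiv T V => .equiv (T.substFH β x m U) (V.substFH β x m U)
  | .botG => .botG
  | .conj A B => .conj (A.substFH β x m U) (B.substFH β x m U)
  | .disj A B => .disj (A.substFH β x m U) (B.substFH β x m U)
  | .impl A B => .impl (A.substFH β x m U) (B.substFH β x m U)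
  | .pi v A => if v = .fh β x m then .pi v A else .pi v (A.substFH β x m U)
  | .exi v A => if v = .fh β x m then .exi v A else .exi v (A.substFH β x m U)

/-- Substitution of the functional variable f^β_m by the term `U` in a formula. -/
def GForm.substFF (β : LFormula) (m : ℕ) (U : GTerm) : GForm → GForm
  | .gr T γ => .gr (T.substFF β m U) γ
  | .equiv T V => .equiv (T.substFF β m U) (V.substFF β m U)
  | .botG => .botG
  | .conj A B => .conj (A.substFF β m U) (B.substFF β m U)
  | .disj A B => .disj (A.substFF β m U) (B.substFF β m U)
  | .impl A B => .impl (A.substFF β m U) (B.substFF β m U)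
  | .pi v A => if v = .ff β m then .pi v A else .pi v (A.substFF β m U)
  | .exi v A => if v = .ff β m then .exi v A else .exi v (A.substFF β m U)

/-! ### Typing of grounding terms -/

/-- `HasType base T α` : the grounding term `T` is of type `α` (relative to the atomic base,
represented by the assignment `base` of conclusions to the constants naming closed atomic
derivations). -/
inductive HasType (base : ℕ → LFormula) : GTerm → LFormula → Prop
  | konst (i : ℕ) : HasType base (.konst i) (base i)
  | xi (γ : LFormula) (j : ℕ) : HasType base (.xi γ j) γ
  | fh (γ : LFormula) (y j : ℕ) (t : LTerm) : HasType base (.fh γ y j t) (γ.subst y t)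
  | ff {T : GTerm} {δ : LFormula} (γ : LFormula) (j : ℕ) :
      HasType base T δ → HasType base (.ff γ j T) γ
  | andI {T U α β} : HasType base T α → HasType base U β → HasType base (.andI T U) (α.and β)
  | orIL {T α} (β) : HasType base T α → HasType base (.orI true β T) (α.or β)
  | orIR {T β} (α) : HasType base T β → HasType base (.orI false α T) (α.or β)
  | impI {T β} (α : LFormula) (j : ℕ) : HasType base T β → HasType base (.impI α j T) (α.imp β)
  | allI {T α} (x : ℕ) : HasType base T α →
      (∀ γ j, GVar.xi γ j ∈ T.fvar → x ∉ γ.fv) → HasType base (.allI x T) (.all x α)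
  | exI {T} (x : ℕ) (t : LTerm) (α : LFormula) :
      HasType base T (α.subst x t) → t.freeFor x α → HasType base (.exI x t α T) (.ex x α)
  | andEL {T α β} : HasType base T (.and α β) → HasType base (.andE true T) α
  | andER {T α β} : HasType base T (.and α β) → HasType base (.andE false T) β
  | orE {T U Z α β γ} (i j : ℕ) : HasType base T (.or α β) → HasType base U γ →
      HasType base Z γ → HasType base (.orE α β i j T U Z) γ
  | impE {T U α β} : HasType base T (.imp α β) → HasType base U α → HasType base (.impE T U) β
  | allE {T α} (x : ℕ) (t : LTerm) : HasType base T (.all x α) → t.freeFor x α →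
      HasType base (.allE t T) (α.subst x t)
  | exE {T U α β} (x j : ℕ) : HasType base T (.ex x α) → HasType base U β →
      (∀ γ k, GVar.xi γ k ∈ U.fvar → γ ≠ α → x ∉ γ.fv) → HasType base (.exE x α j T U) β
  | botE {T} (α : LFormula) : HasType base T .bot → HasType base (.botE α T) α

/-! ### Derivations -/

/-- Names of the rules of a system of grounding. -/
inductive RuleTag : Type
  | assum | constAx
  | andIntro | orIntroL | orIntroR | impIntro | allIntro | exIntro
  | dAnd | dOr | dImp | dAll | dEx | botT
  | eqRefl | eqSymm | eqTrans | eqPres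
  | congAndI | congAndIInv1 | congAndIInv2 | congAndE
  | congOrI | congOrIInv | congOrE
  | congImpI | congImpIInv | congImpE
  | congAllI | congAllIInv | congAllE
  | congExI | congExIInv | congExE
  | congBotE | congApp
  | rAnd | rOr | rImp | rAll | rEx
  | charR
  | timesI | timesE1 | timesE2 | plusI1 | plusI2 | plusE
  | supI | supE | piI | piE | frakEI | frakEE | botGE
deriving DecidableEq

/-- Derivation trees: each node carries its conclusion, the rule applied,
and the list of the subderivations of the premises (major premise first). -/
inductive PTree : Type
  | node : GForm → RuleTag → List PTree → PTree

/-- Conclusion of a derivation tree. -/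
def PTree.concl : PTree → GForm
  | .node A _ _ => A

/-- The rule applied at the root. -/
def PTree.tag : PTree → RuleTag
  | .node _ r _ => r

/-- `Valid base R Γ t` : the tree `t` is a correct derivation from open assumptions in `Γ`
in the system of grounding over the atomic base represented by `base`, with set `R` of
characteristic rules (premises/conclusion pairs, used for the rewrite equations of
additional non-primitive operational symbols).  With `R = ∅` this is the system `GG`. -/
inductive Valid (base : ℕ → LFormula) (R : Set (List GForm × GForm)) : Set GForm → PTree → Prop
  -- assumption rule
  | assum {Γ A} : A ∈ Γ → Valid base R Γ (.node A .assum [])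
  -- axioms δ : α for the constants naming closed atomic derivations with conclusion α
  | constAx {Γ} (i : ℕ) : Valid base R Γ (.node (.gr (.konst i) (base i)) .constAx [])
  -- type introductions
  | andIntro {Γ t u T U α β} : Valid base R Γ t → Valid base R Γ u →
      t.concl = .gr T α → u.concl = .gr U β →
      Valid base R Γ (.node (.gr (.andI T U) (.and α β)) .andIntro [t, u])
  | orIntroL {Γ t T α β} : Valid base R Γ t → t.concl = .gr T α →
      Valid base R Γ (.node (.gr (.orI true β T) (.or α β)) .orIntroL [t])
  | orIntroR {Γ t T α β} : Valid base R Γ t → t.concl = .gr T β →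
      Valid base R Γ (.node (.gr (.orI false α T) (.or α β)) .orIntroR [t])
  | impIntro {Γ t T α β i} :
      Valid base R (insert (.gr (.xi α i) α) Γ) t → t.concl = .gr T β →
      (∀ B ∈ Γ, GVar.xi α i ∉ B.fvar) →
      Valid base R Γ (.node (.gr (.impI α i T) (.imp α β)) .impIntro [t])
  | allIntro {Γ t T α x} : Valid base R Γ t → t.concl = .gr T α →
      (∀ B ∈ Γ, GVar.ind x ∉ B.fvar) →
      Valid base R Γ (.node (.gr (.allI x T) (.all x α)) .allIntro [t])
  | exIntro {Γ t T α x u} : Valid base R Γ t → t.concl = .gr T (α.subst x u) →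
      u.freeFor x α →
      Valid base R Γ (.node (.gr (.exI x u α T) (.ex x α)) .exIntro [t])
  -- generalized type eliminations
  | dAnd {Γ t s T α β i j A} :
      Valid base R Γ t → t.concl = .gr T (.and α β) →
      Valid base R (insert (.equiv T (.andI (.xi α i) (.xi β j)))
          (insert (.gr (.xi α i) α) (insert (.gr (.xi β j) β) Γ))) s →
      s.concl = A →
      (∀ B ∈ Γ, GVar.xi α i ∉ B.fvar ∧ GVar.xi β j ∉ B.fvar) →
      GVar.xi α i ∉ A.fvar → GVar.xi β j ∉ A.fvar →
      GVar.xi α i ∉ T.fvar → GVar.xi β j ∉ T.fvar →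
      Valid base R Γ (.node A .dAnd [t, s])
  | dOr {Γ t s₁ s₂ T α β i j A} :
      Valid base R Γ t → t.concl = .gr T (.or α β) →
      Valid base R (insert (.equiv T (.orI true β (.xi α i))) (insert (.gr (.xi α i) α) Γ)) s₁ →
      Valid base R (insert (.equiv T (.orI false α (.xi β j))) (insert (.gr (.xi β j) β) Γ)) s₂ →
      s₁.concl = A → s₂.concl = A →
      (∀ B ∈ Γ, GVar.xi α i ∉ B.fvar ∧ GVar.xi β j ∉ B.fvar) →
      GVar.xi α i ∉ A.fvar → GVar.xi β j ∉ A.fvar →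
      GVar.xi α i ∉ T.fvar → GVar.xi β j ∉ T.fvar →
      Valid base R Γ (.node A .dOr [t, s₁, s₂])
  | dImp {Γ t s T α β k m A} :
      Valid base R Γ t → t.concl = .gr T (.imp α β) →
      Valid base R (insert (.equiv T (.impI α k (.ff β m (.xi α k))))
          (insert (.pi (.xi α k) (.impl (.gr (.xi α k) α) (.gr (.ff β m (.xi α k)) β))) Γ)) s →
      s.concl = A →
      (∀ B ∈ Γ, GVar.ff β m ∉ B.fvar) → GVar.ff β m ∉ A.fvar → GVar.ff β m ∉ T.fvar →
      Valid base R Γ (.node A .dImp [t, s])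
  | dAll {Γ t s T α x m A} :
      Valid base R Γ t → t.concl = .gr T (.all x α) →
      Valid base R (insert (.equiv T (.allI x (.fh α x m (.var x))))
          (insert (.pi (.ind x) (.gr (.fh α x m (.var x)) α)) Γ)) s →
      s.concl = A →
      (∀ B ∈ Γ, GVar.fh α x m ∉ B.fvar) → GVar.fh α x m ∉ A.fvar → GVar.fh α x m ∉ T.fvar →
      Valid base R Γ (.node A .dAll [t, s])
  | dEx {Γ t s T α x j A} :
      Valid base R Γ t → t.concl = .gr T (.ex x α) →
      Valid base R (insert (.equiv T (.exI x (.var x) α (.xi α j)))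
          (insert (.gr (.xi α j) α) Γ)) s →
      s.concl = A →
      (∀ B ∈ Γ, GVar.ind x ∉ B.fvar ∧ GVar.xi α j ∉ B.fvar) →
      GVar.ind x ∉ A.fvar → GVar.xi α j ∉ A.fvar → GVar.xi α j ∉ T.fvar →
      Valid base R Γ (.node A .dEx [t, s])
  -- the rule for the type ⊥
  | botT {Γ t T} : Valid base R Γ t → t.concl = .gr T .bot →
      Valid base R Γ (.node .botG .botT [t])
  -- equivalence rules: reflexivity, symmetry, transitivity, preservation of denotation
  | eqRefl {Γ} (T : GTerm) : Valid base R Γ (.node (.equiv T T) .eqRefl [])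
  | eqSymm {Γ t T U} : Valid base R Γ t → t.concl = .equiv T U →
      Valid base R Γ (.node (.equiv U T) .eqSymm [t])
  | eqTrans {Γ t s T U W} : Valid base R Γ t → Valid base R Γ s →
      t.concl = .equiv T U → s.concl = .equiv U W →
      Valid base R Γ (.node (.equiv T W) .eqTrans [t, s])
  | eqPres {Γ t s T U α} : Valid base R Γ t → Valid base R Γ s →
      t.concl = .equiv T U → s.concl = .gr U α →
      Valid base R Γ (.node (.gr T α) .eqPres [t, s])
  -- congruence: operational symbols applied to equivalent terms yield equivalent terms
  | congAndI {Γ t s T U V W} : Valid base R Γ t → Valid base R Γ s →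
      t.concl = .equiv T U → s.concl = .equiv V W →
      Valid base R Γ (.node (.equiv (.andI T V) (.andI U W)) .congAndI [t, s])
  | congAndIInv1 {Γ t T₁ T₂ U₁ U₂} : Valid base R Γ t →
      t.concl = .equiv (.andI T₁ T₂) (.andI U₁ U₂) →
      Valid base R Γ (.node (.equiv T₁ U₁) .congAndIInv1 [t])
  | congAndIInv2 {Γ t T₁ T₂ U₁ U₂} : Valid base R Γ t →
      t.concl = .equiv (.andI T₁ T₂) (.andI U₁ U₂) →
      Valid base R Γ (.node (.equiv T₂ U₂) .congAndIInv2 [t])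
  | congAndE {Γ t T U} (b : Bool) : Valid base R Γ t → t.concl = .equiv T U →
      Valid base R Γ (.node (.equiv (.andE b T) (.andE b U)) .congAndE [t])
  | congOrI {Γ t T U} (b : Bool) (γ : LFormula) : Valid base R Γ t → t.concl = .equiv T U →
      Valid base R Γ (.node (.equiv (.orI b γ T) (.orI b γ U)) .congOrI [t])
  | congOrIInv {Γ t T U b γ} : Valid base R Γ t →
      t.concl = .equiv (.orI b γ T) (.orI b γ U) →
      Valid base R Γ (.node (.equiv T U) .congOrIInv [t])
  | congOrE {Γ t s₁ s₂ T U V₁ V₂ W₁ W₂} (α β : LFormula) (i j : ℕ) :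
      Valid base R Γ t → Valid base R Γ s₁ → Valid base R Γ s₂ →
      t.concl = .equiv T U → s₁.concl = .equiv V₁ V₂ → s₂.concl = .equiv W₁ W₂ →
      Valid base R Γ
        (.node (.equiv (.orE α β i j T V₁ W₁) (.orE α β i j U V₂ W₂)) .congOrE [t, s₁, s₂])
  | congImpI {Γ t T U} (α : LFormula) (i : ℕ) : Valid base R Γ t → t.concl = .equiv T U →
      Valid base R Γ (.node (.equiv (.impI α i T) (.impI α i U)) .congImpI [t])
  | congImpIInv {Γ t T U α i} : Valid base R Γ t →
      t.concl = .equiv (.impI α i T) (.impI α i U) →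
      Valid base R Γ (.node (.equiv T U) .congImpIInv [t])
  | congImpE {Γ t s T₁ T₂ U₁ U₂} : Valid base R Γ t → Valid base R Γ s →
      t.concl = .equiv T₁ T₂ → s.concl = .equiv U₁ U₂ →
      Valid base R Γ (.node (.equiv (.impE T₁ U₁) (.impE T₂ U₂)) .congImpE [t, s])
  | congAllI {Γ t T U} (x : ℕ) : Valid base R Γ t → t.concl = .equiv T U →
      Valid base R Γ (.node (.equiv (.allI x T) (.allI x U)) .congAllI [t])
  | congAllIInv {Γ t T U x} : Valid base R Γ t →
      t.concl = .equiv (.allI x T) (.allI x U) →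
      Valid base R Γ (.node (.equiv T U) .congAllIInv [t])
  | congAllE {Γ t T U} (u : LTerm) : Valid base R Γ t → t.concl = .equiv T U →
      Valid base R Γ (.node (.equiv (.allE u T) (.allE u U)) .congAllE [t])
  | congExI {Γ t T U} (x : ℕ) (u : LTerm) (α : LFormula) :
      Valid base R Γ t → t.concl = .equiv T U →
      Valid base R Γ (.node (.equiv (.exI x u α T) (.exI x u α U)) .congExI [t])
  | congExIInv {Γ t T U x u α} : Valid base R Γ t →
      t.concl = .equiv (.exI x u α T) (.exI x u α U) →
      Valid base R Γ (.node (.equiv T U) .congExIInv [t])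
  | congExE {Γ t s T U V W} (x : ℕ) (α : LFormula) (j : ℕ) :
      Valid base R Γ t → Valid base R Γ s →
      t.concl = .equiv T U → s.concl = .equiv V W →
      Valid base R Γ (.node (.equiv (.exE x α j T V) (.exE x α j U W)) .congExE [t, s])
  | congBotE {Γ t T U} (α : LFormula) : Valid base R Γ t → t.concl = .equiv T U →
      Valid base R Γ (.node (.equiv (.botE α T) (.botE α U)) .congBotE [t])
  | congApp {Γ t s T U V W} : Valid base R Γ t → Valid base R Γ s →
      t.concl = .equiv T U → s.concl = .equiv V W →
      Valid base R Γ (.node (.equiv (.app T V) (.app U W)) .congApp [t, s])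
  -- rewrite equations for computing the non-canonical terms
  | rAnd {Γ} (b : Bool) (T U : GTerm) :
      Valid base R Γ (.node (.equiv (.andE b (.andI T U)) (cond b T U)) .rAnd [])
  | rOrL {Γ} (α β : LFormula) (i j : ℕ) (T U Z : GTerm) :
      Valid base R Γ
        (.node (.equiv (.orE α β i j (.orI true β T) U Z) (U.substXi α i T)) .rOr [])
  | rOrR {Γ} (α β : LFormula) (i j : ℕ) (T U Z : GTerm) :
      Valid base R Γ
        (.node (.equiv (.orE α β i j (.orI false α T) U Z) (Z.substXi β j T)) .rOr [])
  | rImp {Γ} (α : LFormula) (k : ℕ) (T U : GTerm) :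
      Valid base R Γ (.node (.equiv (.impE (.impI α k T) U) (T.substXi α k U)) .rImp [])
  | rAll {Γ} (x : ℕ) (u : LTerm) (T : GTerm) :
      Valid base R Γ (.node (.equiv (.allE u (.allI x T)) (T.substInd x u)) .rAll [])
  | rEx {Γ} (x : ℕ) (u : LTerm) (α : LFormula) (j : ℕ) (T U : GTerm) :
      Valid base R Γ
        (.node (.equiv (.exE x α j (.exI x u α T) U)
          ((U.substInd x u).substXi (α.subst x u) j T)) .rEx [])
  -- characteristic rules of the system (for expansions of GG)
  | charRule {Γ prems concl} {ts : List PTree} :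
      (prems, concl) ∈ R → ts.length = prems.length →
      (∀ (k : ℕ) (t : PTree) (P : GForm), ts[k]? = some t → prems[k]? = some P →
        Valid base R Γ t) →
      (∀ (k : ℕ) (t : PTree) (P : GForm), ts[k]? = some t → prems[k]? = some P →
        t.concl = P) →
      Valid base R Γ (.node concl .charR ts)
  -- intuitionistic logic: ×, +, ⊃, Π, 𝔈, ⊥^G
  | timesI {Γ t s A B} : Valid base R Γ t → Valid base R Γ s → t.concl = A → s.concl = B →
      Valid base R Γ (.node (.conj A B) .timesI [t, s])
  | timesE1 {Γ t A B} : Valid base R Γ t → t.concl = .conj A B →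
      Valid base R Γ (.node A .timesE1 [t])
  | timesE2 {Γ t A B} : Valid base R Γ t → t.concl = .conj A B →
      Valid base R Γ (.node B .timesE2 [t])
  | plusI1 {Γ t A} (B : GForm) : Valid base R Γ t → t.concl = A →
      Valid base R Γ (.node (.disj A B) .plusI1 [t])
  | plusI2 {Γ t B} (A : GForm) : Valid base R Γ t → t.concl = B →
      Valid base R Γ (.node (.disj A B) .plusI2 [t])
  | plusE {Γ t s₁ s₂ A B C} : Valid base R Γ t → t.concl = .disj A B →
      Valid base R (insert A Γ) s₁ → s₁.concl = C →
      Valid base R (insert B Γ) s₂ → s₂.concl = C →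
      Valid base R Γ (.node C .plusE [t, s₁, s₂])
  | supI {Γ t A B} : Valid base R (insert A Γ) t → t.concl = B →
      Valid base R Γ (.node (.impl A B) .supI [t])
  | supE {Γ t s A B} : Valid base R Γ t → Valid base R Γ s →
      t.concl = .impl A B → s.concl = A →
      Valid base R Γ (.node B .supE [t, s])
  | piI {Γ t A} (v : GVar) : Valid base R Γ t → t.concl = A →
      (∀ C ∈ Γ, v ∉ C.fvar) →
      Valid base R Γ (.node (.pi v A) .piI [t])
  | piEInd {Γ t A x u} : Valid base R Γ t → t.concl = .pi (.ind x) A →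
      Valid base R Γ (.node (A.substInd x u) .piE [t])
  | piEXi {Γ t A α i τ} : Valid base R Γ t → t.concl = .pi (.xi α i) A →
      HasType base τ α → τ.noFunVar →
      Valid base R Γ (.node (A.substXi α i τ) .piE [t])
  | piEFh {Γ t A β x m τ} : Valid base R Γ t → t.concl = .pi (.fh β x m) A →
      HasType base τ β → τ.noFunVar → (∀ γ j, GVar.xi γ j ∈ τ.fvar → x ∉ γ.fv) →
      Valid base R Γ (.node (A.substFH β x m τ) .piE [t])
  | piEFf {Γ t A β m τ} : Valid base R Γ t → t.concl = .pi (.ff β m) A →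
      HasType base τ β → τ.noFunVar →
      Valid base R Γ (.node (A.substFF β m τ) .piE [t])
  | frakEIInd {Γ t A x u} : Valid base R Γ t → t.concl = A.substInd x u →
      Valid base R Γ (.node (.exi (.ind x) A) .frakEI [t])
  | frakEIXi {Γ t A α i τ} : Valid base R Γ t → t.concl = A.substXi α i τ →
      HasType base τ α → τ.noFunVar →
      Valid base R Γ (.node (.exi (.xi α i) A) .frakEI [t])
  | frakEIFh {Γ t A β x m τ} : Valid base R Γ t → t.concl = A.substFH β x m τ →
      HasType base τ β → τ.noFunVar → (∀ γ j, GVar.xi γ j ∈ τ.fvar → x ∉ γ.fv) →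
      Valid base R Γ (.node (.exi (.fh β x m) A) .frakEI [t])
  | frakEIFf {Γ t A β m τ} : Valid base R Γ t → t.concl = A.substFF β m τ →
      HasType base τ β → τ.noFunVar →
      Valid base R Γ (.node (.exi (.ff β m) A) .frakEI [t])
  | frakEE {Γ t s A B} (v : GVar) : Valid base R Γ t → t.concl = .exi v A →
      Valid base R (insert A Γ) s → s.concl = B →
      (∀ C ∈ Γ, v ∉ C.fvar) → v ∉ B.fvar →
      Valid base R Γ (.node B .frakEE [t, s])
  | botGE {Γ t} (A : GForm) : Valid base R Γ t → t.concl = .botG →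
      Valid base R Γ (.node A .botGE [t])

/-- `Deriv base R Γ A` : the formula `A` is derivable from assumptions `Γ` in the system
of grounding determined by `base` and `R`.  `Deriv base ∅ Γ A` is derivability in `GG`,
i.e. `Γ ⊢_GG A`. -/
def Deriv (base : ℕ → LFormula) (R : Set (List GForm × GForm)) (Γ : Set GForm)
    (A : GForm) : Prop :=
  ∃ t : PTree, Valid base R Γ t ∧ t.concl = A

/-! ### Part B: occurrences, cut-segments, measures, reductions and normal form -/

/-- Positions (occurrences) in a derivation tree: a path from the root (the conclusion,
standing lowest) to a node; longer positions stand higher in the derivation. -/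
abbrev Pos := List ℕ

/-- The subtree of `t` at position `p` (if any). -/
def PTree.sub : PTree → Pos → Option PTree
  | t, [] => some t
  | .node _ _ l, k :: p => (l[k]?).bind fun c => PTree.sub c p
termination_by t p => p.length

/-- The formula occurring at position `p`. -/
def formulaAt (Δ : PTree) (p : Pos) : Option GForm := (Δ.sub p).map PTree.concl

/-- The rule applied at position `p`. -/
def tagAt (Δ : PTree) (p : Pos) : Option RuleTag := (Δ.sub p).map PTree.tag

/-- The occurrence `p` stands above the occurrence `q` (`q` is a proper prefix of `p`;
conclusions stand at the bottom). -/
def StandsAbove (p q : Pos) : Prop := q ≠ p ∧ q <+: p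

/-- Two occurrences are side-connected iff they are premises of one and the same
inference. -/
def SideConnected (Δ : PTree) (p q : Pos) : Prop :=
  (formulaAt Δ p).isSome ∧ (formulaAt Δ q).isSome ∧
  ∃ r k m, k ≠ m ∧ p = r ++ [k] ∧ q = r ++ [m]

/-- `r` is a type introduction rule. -/
def RuleTag.isTypeIntro (r : RuleTag) : Prop :=
  r = .andIntro ∨ r = .orIntroL ∨ r = .orIntroR ∨ r = .impIntro ∨ r = .allIntro ∨ r = .exIntro

/-- `r` is an introduction rule for a logical constant of the enriched language. -/
def RuleTag.isLogicIntro (r : RuleTag) : Prop :=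
  r = .timesI ∨ r = .plusI1 ∨ r = .plusI2 ∨ r = .supI ∨ r = .piI ∨ r = .frakEI

/-- `r` is a generalized type elimination rule. -/
def RuleTag.isTypeElim (r : RuleTag) : Prop :=
  r = .dAnd ∨ r = .dOr ∨ r = .dImp ∨ r = .dAll ∨ r = .dEx

/-- `r` is one of (+_E), (𝔈_E) or a type elimination (the rules through which segments
may pass). -/
def RuleTag.isPermElim (r : RuleTag) : Prop :=
  r = .plusE ∨ r = .frakEE ∨ r.isTypeElim

/-- `r` is an elimination rule (with its major premise as first premise). -/
def RuleTag.isMajorElim (r : RuleTag) : Prop :=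
  r = .timesE1 ∨ r = .timesE2 ∨ r = .plusE ∨ r = .supE ∨ r = .piE ∨ r = .frakEE ∨
    r.isTypeElim

/-- The elimination rule `re` corresponds to the introduction rule `ri`
(D_s for sI, (κ_E) for (κ_I)). -/
def RuleTag.matchIE : RuleTag → RuleTag → Prop
  | .andIntro, .dAnd => True
  | .orIntroL, .dOr => True
  | .orIntroR, .dOr => True
  | .impIntro, .dImp => True
  | .allIntro, .dAll => True
  | .exIntro, .dEx => True
  | .timesI, .timesE1 => True
  | .timesI, .timesE2 => True
  | .plusI1, .plusE => True
  | .plusI2, .plusE => True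
  | .supI, .supE => True
  | .piI, .piE => True
  | .frakEI, .frakEE => True
  | _, _ => False

/-- `IsCutSeg Δ σ A` : `σ` (listed from the upper edge down to the lower edge) is a
cut-segment of `Δ` with formula `A`: a sequence of occurrences of `A` whose first member is
the conclusion of a type introduction or of a logical introduction, each following member is
the conclusion of (+_E), (𝔈_E) or a type elimination of which the preceding member is a
minor premise, and whose last member is the major premise of the elimination corresponding
to the initial introduction. -/
def IsCutSeg (Δ : PTree) (σ : List Pos) (A : GForm) : Prop :=
  σ ≠ [] ∧
  (∀ p ∈ σ, formulaAt Δ p = some A) ∧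
  (∃ p ri, σ.head? = some p ∧ tagAt Δ p = some ri ∧ (ri.isTypeIntro ∨ ri.isLogicIntro) ∧
    ∃ q pr re, σ.getLast? = some q ∧ q = pr ++ [0] ∧ tagAt Δ pr = some re ∧
      ri.matchIE re) ∧
  List.Chain' (fun p q => (∃ k, k ≠ 0 ∧ q ++ [k] = p) ∧
    ∃ r', tagAt Δ q = some r' ∧ r'.isPermElim) σ

/-- Lexicographic ("alphabetic") strict order on measures. -/
def mlt (a b : ℕ × ℕ) : Prop := a.1 < b.1 ∨ (a.1 = b.1 ∧ a.2 < b.2)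

/-- Lexicographic order on measures (reflexive). -/
def mle (a b : ℕ × ℕ) : Prop := a = b ∨ mlt a b

/-- The type-measure τ(A): the maximum of k¹(α) over the subformulas `U : α` of `A`
(0 if there are none). -/
def GForm.tmeas : GForm → ℕ
  | .gr _ α => α.compl
  | .equiv _ _ => 0
  | .botG => 0
  | .conj A B => max A.tmeas B.tmeas
  | .disj A B => max A.tmeas B.tmeas
  | .impl A B => max A.tmeas B.tmeas
  | .pi _ A => A.tmeas
  | .exi _ A => A.tmeas

/-- The logical measure k²(A) of a formula of the enriched language. -/
def GForm.lmeas : GForm → ℕ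
  | .gr _ _ => 0
  | .equiv _ _ => 0
  | .botG => 0
  | .conj A B => max A.lmeas B.lmeas + 1
  | .disj A B => max A.lmeas B.lmeas + 1
  | .impl A B => max A.lmeas B.lmeas + 1
  | .pi _ A => A.lmeas + 1
  | .exi _ A => A.lmeas + 1

/-- The measure μ(A) = (τ(A), k²(A)). -/
def GForm.meas (A : GForm) : ℕ × ℕ := (A.tmeas, A.lmeas)

/-- M_Δ : the set of the measures of the cut-segments of Δ. -/
def measSet (Δ : PTree) : Set (ℕ × ℕ) := {m | ∃ σ A, IsCutSeg Δ σ A ∧ GForm.meas A = m}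

/-- `m` is MAX(M_Δ) (with MAX(∅) = (0,0)). -/
def IsMaxMeas (Δ : PTree) (m : ℕ × ℕ) : Prop :=
  (m ∈ measSet Δ ∨ (measSet Δ = ∅ ∧ m = (0, 0))) ∧ ∀ m' ∈ measSet Δ, mle m' m

/-- `DegreeIs Δ d` : the degree of Δ is `d = (MAX(M_Δ), n)`, where `n` is the sum of the
lengths of the cut-segments of Δ of measure MAX(M_Δ). -/
def DegreeIs (Δ : PTree) (d : (ℕ × ℕ) × ℕ) : Prop :=
  IsMaxMeas Δ d.1 ∧
  ∃ s : Finset (List Pos),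
    (∀ σ, σ ∈ s ↔ ∃ A, IsCutSeg Δ σ A ∧ GForm.meas A = d.1) ∧
    d.2 = s.sum List.length

/-- Lexicographic strict order on degrees. -/
def dlt (d e : (ℕ × ℕ) × ℕ) : Prop := mlt d.1 e.1 ∨ (d.1 = e.1 ∧ d.2 < e.2)

/-- Δ is non-normal iff it contains a cut-segment (equivalently, iff its degree is not
((0,0),0)). -/
def NonNormal (Δ : PTree) : Prop := ∃ σ A, IsCutSeg Δ σ A

/-- A topmost maximal cut-segment (tmcs): a cut-segment of maximal measure such that no
cut-segment of equal measure has its lower edge above its upper edge. -/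
def IsTmcs (Δ : PTree) (σ : List Pos) (A : GForm) : Prop :=
  IsCutSeg Δ σ A ∧ IsMaxMeas Δ (GForm.meas A) ∧
  ∀ σ' A', IsCutSeg Δ σ' A' → GForm.meas A' = GForm.meas A →
    ∀ p q, σ'.getLast? = some p → σ.head? = some q → ¬ StandsAbove p q

/-- Two cut-segments are disjoint iff they share no occurrence. -/
def SegDisjoint (σ₁ σ₂ : List Pos) : Prop := ∀ p ∈ σ₁, p ∉ σ₂

/-- `σ₂` stands to the right of `σ₁`: the lower edge of `σ₁` is side-connected either with
an occurrence in `σ₂` or with a formula occurrence of Δ standing below the lower edge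
of `σ₂`. -/
def RightRel (Δ : PTree) (σ₁ σ₂ : List Pos) : Prop :=
  ∃ p, σ₁.getLast? = some p ∧
    ((∃ q ∈ σ₂, SideConnected Δ p q) ∨
     (∃ q r, σ₂.getLast? = some r ∧ StandsAbove r q ∧ SideConnected Δ p q))

/-- Map a function over all the formulas occurring in a derivation tree
(used for substitution throughout a derivation). -/
def PTree.mapF (f : GForm → GForm) : PTree → PTree
  | .node A r l => .node (f A) r (l.attach.map fun c => c.1.mapF f)
termination_by t => sizeOf t
decreasing_by
  have := List.sizeOf_lt_of_mem c.2
  simp only [PTree.node.sizeOf_spec]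
  omega

/-- Replace the assumption leaves with formula `A` by the derivation `d`. -/
def PTree.replaceAssm : PTree → GForm → PTree → PTree
  | .node B r l, A, d =>
      if r = RuleTag.assum ∧ l = [] ∧ B = A then d
      else .node B r (l.attach.map fun c => c.1.replaceAssm A d)
termination_by t _ _ => sizeOf t
decreasing_by
  have := List.sizeOf_lt_of_mem c.2
  simp only [PTree.node.sizeOf_spec]
  omega

/-- The one-node derivation consisting of an application of the reflexivity axiom to T. -/
def reflLeaf (T : GTerm) : PTree := .node (.equiv T T) .eqRefl []

/-- `Red1 Δ Δ'` : `Δ'` is obtained from `Δ` by one application of a reduction function for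
typing maximal formulas (TMF) or for logically maximal formulas (LMF), or of a permutation
function, possibly inside a subderivation. -/
inductive Red1 : PTree → PTree → Prop
  -- reduction inside a subderivation
  | congr {A r l₁ l₂ t t'} : Red1 t t' →
      Red1 (.node A r (l₁ ++ t :: l₂)) (.node A r (l₁ ++ t' :: l₂))
  -- TMF reductions
  | tmfAnd {A : GForm} {α β : LFormula} {T U : GTerm} {i j : ℕ} {d₁ d₂ minor : PTree} :
      Red1 (.node A .dAnd [.node (.gr (.andI T U) (.and α β)) .andIntro [d₁, d₂], minor])
        ((((minor.mapF fun B => (B.substXi α i T).substXi β j U).replaceAssm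
            (.equiv (.andI T U) (.andI T U)) (reflLeaf (.andI T U))).replaceAssm
            (.gr T α) d₁).replaceAssm (.gr U β) d₂)
  | tmfOrL {A : GForm} {α β : LFormula} {T : GTerm} {i : ℕ} {d₁ m₁ m₂ : PTree} :
      Red1 (.node A .dOr [.node (.gr (.orI true β T) (.or α β)) .orIntroL [d₁], m₁, m₂])
        (((m₁.mapF fun B => B.substXi α i T).replaceAssm
            (.equiv (.orI true β T) (.orI true β T)) (reflLeaf (.orI true β T))).replaceAssm
            (.gr T α) d₁)
  | tmfOrR {A : GForm} {α β : LFormula} {T : GTerm} {j : ℕ} {d₁ m₁ m₂ : PTree} :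
      Red1 (.node A .dOr [.node (.gr (.orI false α T) (.or α β)) .orIntroR [d₁], m₁, m₂])
        (((m₂.mapF fun B => B.substXi β j T).replaceAssm
            (.equiv (.orI false α T) (.orI false α T)) (reflLeaf (.orI false α T))).replaceAssm
            (.gr T β) d₁)
  | tmfImp {A : GForm} {α β : LFormula} {T : GTerm} {k m : ℕ} {d₁ minor : PTree} :
      Red1 (.node A .dImp [.node (.gr (.impI α k T) (.imp α β)) .impIntro [d₁], minor])
        (((minor.mapF fun B => B.substFF β m T).replaceAssm
            (.equiv (.impI α k T) (.impI α k T)) (reflLeaf (.impI α k T))).replaceAssm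
            (.pi (.xi α k) (.impl (.gr (.xi α k) α) (.gr T β)))
            (.node (.pi (.xi α k) (.impl (.gr (.xi α k) α) (.gr T β))) .piI
              [.node (.impl (.gr (.xi α k) α) (.gr T β)) .supI [d₁]]))
  | tmfAll {A : GForm} {α : LFormula} {x m : ℕ} {T : GTerm} {d₁ minor : PTree} :
      Red1 (.node A .dAll [.node (.gr (.allI x T) (.all x α)) .allIntro [d₁], minor])
        (((minor.mapF fun B => B.substFH α x m T).replaceAssm
            (.equiv (.allI x T) (.allI x T)) (reflLeaf (.allI x T))).replaceAssm
            (.pi (.ind x) (.gr T α)) (.node (.pi (.ind x) (.gr T α)) .piI [d₁]))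
  | tmfEx {A : GForm} {α : LFormula} {x j : ℕ} {u : LTerm} {T : GTerm} {d₁ minor : PTree} :
      Red1 (.node A .dEx [.node (.gr (.exI x u α T) (.ex x α)) .exIntro [d₁], minor])
        (((minor.mapF fun B => (B.substInd x u).substXi (α.subst x u) j T).replaceAssm
            (.equiv (.exI x u α T) (.exI x u α T)) (reflLeaf (.exI x u α T))).replaceAssm
            (.gr T (α.subst x u)) d₁)
  -- LMF reductions
  | lmfTimes1 {A B : GForm} {d₁ d₂ : PTree} :
      Red1 (.node A .timesE1 [.node (.conj A B) .timesI [d₁, d₂]]) d₁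
  | lmfTimes2 {A B : GForm} {d₁ d₂ : PTree} :
      Red1 (.node B .timesE2 [.node (.conj A B) .timesI [d₁, d₂]]) d₂
  | lmfPlus1 {A B C : GForm} {d s₁ s₂ : PTree} :
      Red1 (.node C .plusE [.node (.disj A B) .plusI1 [d], s₁, s₂]) (s₁.replaceAssm A d)
  | lmfPlus2 {A B C : GForm} {d s₁ s₂ : PTree} :
      Red1 (.node C .plusE [.node (.disj A B) .plusI2 [d], s₁, s₂]) (s₂.replaceAssm B d)
  | lmfSup {A B : GForm} {d₁ d₂ : PTree} :
      Red1 (.node B .supE [.node (.impl A B) .supI [d₁], d₂]) (d₁.replaceAssm A d₂)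
  | lmfPiInd {A : GForm} {x : ℕ} {u : LTerm} {d : PTree} :
      Red1 (.node (A.substInd x u) .piE [.node (.pi (.ind x) A) .piI [d]])
        (d.mapF (GForm.substInd x u))
  | lmfPiXi {A : GForm} {α : LFormula} {i : ℕ} {τ : GTerm} {d : PTree} :
      Red1 (.node (A.substXi α i τ) .piE [.node (.pi (.xi α i) A) .piI [d]])
        (d.mapF (GForm.substXi α i τ))
  | lmfPiFh {A : GForm} {β : LFormula} {x m : ℕ} {τ : GTerm} {d : PTree} :
      Red1 (.node (A.substFH β x m τ) .piE [.node (.pi (.fh β x m) A) .piI [d]])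
        (d.mapF (GForm.substFH β x m τ))
  | lmfPiFf {A : GForm} {β : LFormula} {m : ℕ} {τ : GTerm} {d : PTree} :
      Red1 (.node (A.substFF β m τ) .piE [.node (.pi (.ff β m) A) .piI [d]])
        (d.mapF (GForm.substFF β m τ))
  | lmfFrakEInd {A B : GForm} {x : ℕ} {u : LTerm} {d s : PTree} :
      d.concl = A.substInd x u →
      Red1 (.node B .frakEE [.node (.exi (.ind x) A) .frakEI [d], s])
        ((s.mapF (GForm.substInd x u)).replaceAssm (A.substInd x u) d)
  | lmfFrakEXi {A B : GForm} {α : LFormula} {i : ℕ} {τ : GTerm} {d s : PTree} :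
      d.concl = A.substXi α i τ →
      Red1 (.node B .frakEE [.node (.exi (.xi α i) A) .frakEI [d], s])
        ((s.mapF (GForm.substXi α i τ)).replaceAssm (A.substXi α i τ) d)
  | lmfFrakEFh {A B : GForm} {β : LFormula} {x m : ℕ} {τ : GTerm} {d s : PTree} :
      d.concl = A.substFH β x m τ →
      Red1 (.node B .frakEE [.node (.exi (.fh β x m) A) .frakEI [d], s])
        ((s.mapF (GForm.substFH β x m τ)).replaceAssm (A.substFH β x m τ) d)
  | lmfFrakEFf {A B : GForm} {β : LFormula} {m : ℕ} {τ : GTerm} {d s : PTree} :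
      d.concl = A.substFF β m τ →
      Red1 (.node B .frakEE [.node (.exi (.ff β m) A) .frakEI [d], s])
        ((s.mapF (GForm.substFF β m τ)).replaceAssm (A.substFF β m τ) d)
  -- permutation functions
  | perm {B S : GForm} {er pr : RuleTag} {maj : PTree} {ms rest : List PTree} :
      er.isMajorElim → pr.isPermElim →
      Red1 (.node B er (.node S pr (maj :: ms) :: rest))
        (.node B pr (maj :: ms.map fun mnr => .node B er (mnr :: rest)))

/-- Δ immediately reduces to Δ' (Δ ⪰ Δ'). -/
def RedEq (Δ Δ' : PTree) : Prop := Δ = Δ' ∨ Red1 Δ Δ'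

/-- Δ reduces to Δ' (Δ ≻ Δ'): there is a finite chain Δ = Δ₁ ⪰ Δ₂ ⪰ ... ⪰ Δₙ = Δ'. -/
def Reduces (Δ Δ' : PTree) : Prop := Relation.ReflTransGen RedEq Δ Δ'

/-- The individual variables occurring unbound in (a formula occurrence of) a
derivation. -/
def treeIndVars (Δ : PTree) : Set ℕ :=
  {x | ∃ p A, formulaAt Δ p = some A ∧ GVar.ind x ∈ A.fvar}

/-- `R` is a correct set of characteristic rules of a system of grounding: the premises and
conclusions of its rules are equivalences, and the rewrite equations are closed under
substitution of (all kinds of) variables by terms. -/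
def CharRuleSet (R : Set (List GForm × GForm)) : Prop :=
  (∀ p c, (p, c) ∈ R →
    ((∀ P ∈ p, ∃ T U : GTerm, P = GForm.equiv T U) ∧ ∃ T U : GTerm, c = GForm.equiv T U)) ∧
  (∀ p c, (p, c) ∈ R →
    (∀ x u, (p.map (GForm.substInd x u), c.substInd x u) ∈ R) ∧
    (∀ α i W, (p.map (GForm.substXi α i W), c.substXi α i W) ∈ R) ∧
    (∀ β x m U, (p.map (GForm.substFH β x m U), c.substFH β x m U) ∈ R) ∧
    (∀ β m U, (p.map (GForm.substFF β m U), c.substFF β m U) ∈ R))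

/-! Choose, among the cut-segments of maximal measure, one whose upper edge is lexicographically
greatest, positions being paths from the root in which a major premise has index `0`.  Every
member of a cut-segment is a prefix of its upper edge.  So a cut-segment of the same measure whose
lower edge stands above our upper edge, or which passes through or below the sibling of our lower
edge (a major premise, so the sibling has a nonzero index), has a lexicographically greater upper
edge. -/

theorem mle_iff_toLex_le {a b : ℕ × ℕ} : mle a b ↔ toLex a ≤ toLex b := by
  rw [mle, mlt, le_iff_eq_or_lt, Prod.Lex.toLex_lt_toLex, toLex_inj, eq_comm]

theorem PTree.sub_node_cons (A : GForm) (r : RuleTag) (l : List PTree) (k : ℕ) (p : Pos) :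
    (PTree.node A r l).sub (k :: p) = l[k]?.bind fun c => c.sub p := by
  rw [PTree.sub]

theorem PTree.finite_setOf_isSome_sub : ∀ t : PTree, {p : Pos | (t.sub p).isSome}.Finite
  | .node A r l => by
    have ih : ∀ c ∈ l, {p : Pos | (c.sub p).isSome}.Finite := fun c _ =>
      PTree.finite_setOf_isSome_sub c
    refine (((Set.finite_Iio l.length).image2 List.cons
      ((List.finite_toSet l).biUnion ih)).insert []).subset ?_
    rintro (_ | ⟨k, p⟩) hp
    · exact Set.mem_insert _ _
    · simp only [Set.mem_ofPred_eq, PTree.sub_node_cons, Option.isSome_bind,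
        Option.any_eq_true, List.getElem?_eq_some_iff] at hp
      obtain ⟨c, ⟨hk, rfl⟩, hcp⟩ := hp
      exact Set.mem_insert_of_mem _
        (Set.mem_image2_of_mem hk (Set.mem_biUnion (List.getElem_mem hk) hcp))
termination_by t => sizeOf t
decreasing_by
  have := List.sizeOf_lt_of_mem ‹_ ∈ l›
  simp only [PTree.node.sizeOf_spec]
  omega

theorem isSome_sub_of_formulaAt_eq_some {Δ : PTree} {p : Pos} {A : GForm}
    (h : formulaAt Δ p = some A) : (Δ.sub p).isSome := by
  simpa [formulaAt] using congrArg Option.isSome h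

theorem finite_setOf_formulaAt_eq_some (Δ : PTree) :
    {A : GForm | ∃ p, formulaAt Δ p = some A}.Finite := by
  refine ((PTree.finite_setOf_isSome_sub Δ).image fun p => (formulaAt Δ p).getD .botG).subset ?_
  rintro A ⟨p, hp⟩
  exact ⟨p, isSome_sub_of_formulaAt_eq_some hp, by simp [hp]⟩

theorem StandsAbove.of_isPrefix {p q u : Pos} (h : StandsAbove p q) (hpu : p <+: u) :
    StandsAbove u q :=
  ⟨fun hqu => h.1 (List.IsPrefix.eq_of_length h.2
      (le_antisymm h.2.length_le (hqu ▸ hpu.length_le))), h.2.trans hpu⟩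

theorem StandsAbove.lt {p q : Pos} (h : StandsAbove p q) : q < p := by
  obtain ⟨t, rfl⟩ := h.2
  cases t with
  | nil => exact absurd (List.append_nil q).symm h.1
  | cons a t => simpa using List.Lex.append_left (· < ·) (List.Lex.nil (a := a) (l := t)) q

theorem lt_of_isPrefix_of_isPrefix {r u v : Pos} {m : ℕ} (hm : m ≠ 0)
    (hu : r ++ [0] <+: u) (hv : r ++ [m] <+: v) : u < v := by
  obtain ⟨s, rfl⟩ := hu
  obtain ⟨s', rfl⟩ := hv
  simpa using List.Lex.append_left (· < ·)
    (List.Lex.rel (l₁ := s) (l₂ := s') (Nat.pos_of_ne_zero hm)) r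

theorem SideConnected.exists_eq_append {Δ : PTree} {r q : Pos} (h : SideConnected Δ (r ++ [0]) q) :
    ∃ m, m ≠ 0 ∧ q = r ++ [m] := by
  obtain ⟨-, -, r', k, m, hkm, hp, rfl⟩ := h
  obtain ⟨rfl, hk⟩ := List.append_inj' hp rfl
  obtain rfl : k = 0 := (List.singleton_inj.1 hk).symm
  exact ⟨m, hkm.symm, rfl⟩

namespace IsCutSeg

variable {Δ : PTree} {σ : List Pos} {A : GForm}

theorem exists_formulaAt_eq_some (h : IsCutSeg Δ σ A) : ∃ p, formulaAt Δ p = some A := by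
  obtain ⟨p, hp⟩ := List.exists_mem_of_ne_nil σ h.1
  exact ⟨p, h.2.1 p hp⟩

theorem exists_head (h : IsCutSeg Δ σ A) : ∃ u, σ.head? = some u := by
  obtain ⟨u, -, hu, -⟩ := h.2.2.1
  exact ⟨u, hu⟩

theorem exists_getLast_eq_append_zero (h : IsCutSeg Δ σ A) :
    ∃ r, σ.getLast? = some (r ++ [0]) := by
  obtain ⟨-, -, -, -, -, -, r, -, hl, rfl, -⟩ := h.2.2.1
  exact ⟨r, hl⟩

theorem isPrefix_head (h : IsCutSeg Δ σ A) {u q : Pos} (hu : σ.head? = some u) (hq : q ∈ σ) :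
    q <+: u := by
  obtain ⟨t, rfl⟩ : ∃ t, σ = u :: t := List.head?_eq_some_iff.1 hu
  have : Trans (fun p q : Pos => q <+: p) (fun p q => q <+: p) (fun p q => q <+: p) :=
    ⟨fun h₁ h₂ => h₂.trans h₁⟩
  have hpw := List.isChain_iff_pairwise.1 <|
    h.2.2.2.imp (S := fun p q => q <+: p) fun _ _ ⟨⟨k, _, hk⟩, _⟩ => ⟨[k], hk⟩
  rcases List.mem_cons.1 hq with rfl | hq
  · exact List.prefix_refl q
  · exact List.rel_of_pairwise_cons hpw hq

theorem head_lt_head_of_standsAbove {σ' : List Pos} {A' : GForm} {p q u' : Pos}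
    (hσ' : IsCutSeg Δ σ' A') (hp : σ'.getLast? = some p) (hu' : σ'.head? = some u')
    (h : StandsAbove p q) : q < u' :=
  (h.of_isPrefix (hσ'.isPrefix_head hu' (List.mem_of_mem_getLast? hp))).lt

end IsCutSeg

theorem RightRel.exists_sideConnected_isPrefix {Δ : PTree} {σ σ' : List Pos} {A' : GForm}
    {u' : Pos} (hσ' : IsCutSeg Δ σ' A') (hu' : σ'.head? = some u') (h : RightRel Δ σ σ') :
    ∃ p q, σ.getLast? = some p ∧ SideConnected Δ p q ∧ q <+: u' := by
  obtain ⟨p, hp, ⟨q, hq, hpq⟩ | ⟨q, r, hr, hrq, hpq⟩⟩ := h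
  · exact ⟨p, q, hp, hpq, hσ'.isPrefix_head hu' hq⟩
  · exact ⟨p, q, hp, hpq, hrq.2.trans (hσ'.isPrefix_head hu' (List.mem_of_mem_getLast? hr))⟩

theorem IsCutSeg.head_lt_head_of_rightRel {Δ : PTree} {σ σ' : List Pos} {A A' : GForm}
    {u u' : Pos} (hσ : IsCutSeg Δ σ A) (hu : σ.head? = some u) (hσ' : IsCutSeg Δ σ' A')
    (hu' : σ'.head? = some u') (h : RightRel Δ σ σ') : u < u' := by
  obtain ⟨p, q, hp, hpq, hqu'⟩ := h.exists_sideConnected_isPrefix hσ' hu'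
  obtain ⟨r, hr⟩ := hσ.exists_getLast_eq_append_zero
  obtain rfl : p = r ++ [0] := Option.some_inj.1 (hp.symm.trans hr)
  obtain ⟨m, hm, rfl⟩ := hpq.exists_eq_append
  exact lt_of_isPrefix_of_isPrefix hm (hσ.isPrefix_head hu (List.mem_of_mem_getLast? hr)) hqu'

theorem measSet_finite (Δ : PTree) : (measSet Δ).Finite := by
  refine ((finite_setOf_formulaAt_eq_some Δ).image GForm.meas).subset ?_
  rintro _ ⟨σ, A, hσ, rfl⟩
  exact ⟨A, hσ.exists_formulaAt_eq_some, rfl⟩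

theorem exists_isMaxMeas_mem {Δ : PTree} (hnn : NonNormal Δ) :
    ∃ M ∈ measSet Δ, IsMaxMeas Δ M := by
  obtain ⟨σ, A, h⟩ := hnn
  obtain ⟨M, hM, hmax⟩ :=
    Set.exists_max_image (measSet Δ) toLex (measSet_finite Δ) ⟨_, σ, A, h, rfl⟩
  exact ⟨M, hM, Or.inl hM, fun m hm => mle_iff_toLex_le.2 (hmax m hm)⟩

def upperEdges (Δ : PTree) (M : ℕ × ℕ) : Set Pos :=
  {u | ∃ σ A, IsCutSeg Δ σ A ∧ GForm.meas A = M ∧ σ.head? = some u}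

theorem upperEdges_finite (Δ : PTree) (M : ℕ × ℕ) : (upperEdges Δ M).Finite := by
  refine (PTree.finite_setOf_isSome_sub Δ).subset ?_
  rintro u ⟨σ, A, hσ, -, hu⟩
  exact isSome_sub_of_formulaAt_eq_some (hσ.2.1 u (List.mem_of_mem_head? hu))

theorem upperEdges_nonempty {Δ : PTree} {M : ℕ × ℕ} (hM : M ∈ measSet Δ) :
    (upperEdges Δ M).Nonempty := by
  obtain ⟨σ, A, hσ, hA⟩ := hM
  obtain ⟨u, hu⟩ := hσ.exists_head
  exact ⟨u, σ, A, hσ, hA, hu⟩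

theorem topmost_rightmost_maximal_cut_segment_exists_general (Δ : PTree) (hnn : NonNormal Δ) :
    ∃ σ A, IsTmcs Δ σ A ∧
      ¬ ∃ σ' A', IsCutSeg Δ σ' A' ∧ GForm.meas A' = GForm.meas A ∧ RightRel Δ σ σ' := by
  obtain ⟨M, hM, hMax⟩ := exists_isMaxMeas_mem hnn
  obtain ⟨u, ⟨σ, A, hσ, rfl, hu⟩, hu_max⟩ :=
    Set.exists_max_image (upperEdges Δ M) id (upperEdges_finite Δ M) (upperEdges_nonempty hM)
  have not_lt_head : ∀ σ' A' u', IsCutSeg Δ σ' A' → A'.meas = A.meas → σ'.head? = some u' →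
      ¬ u < u' :=
    fun σ' A' u' hσ' hA' hu' => not_lt.2 (hu_max u' ⟨σ', A', hσ', hA', hu'⟩)
  refine ⟨σ, A, ⟨hσ, hMax, ?_⟩, ?_⟩
  · intro σ' A' hσ' hA' p q hp hq hpq
    obtain rfl : q = u := Option.some_inj.1 (hq.symm.trans hu)
    obtain ⟨u', hu'⟩ := hσ'.exists_head
    exact not_lt_head σ' A' u' hσ' hA' hu' (hσ'.head_lt_head_of_standsAbove hp hu' hpq)
  · rintro ⟨σ', A', hσ', hA', hright⟩
    obtain ⟨u', hu'⟩ := hσ'.exists_head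
    exact not_lt_head σ' A' u' hσ' hA' hu' (hσ.head_lt_head_of_rightRel hu hσ' hu' hright)

/-- existence of a topmost rightmost maximal cut-segment.  If Δ is a
non-normal derivation in a system of grounding Σ, then there is a topmost maximal
cut-segment σ of Δ such that for no cut-segment σ* in Δ is it the case that μ(σ*) = μ(σ)
and the lower edge of σ is side-connected with an occurrence in σ* or with a formula
occurrence in Δ standing below the lower edge of σ*. -/
theorem topmost_rightmost_maximal_cut_segment_exists (base : ℕ → LFormula)
    (R : Set (List GForm × GForm)) (hR : CharRuleSet R) (Γ : Set GForm) (Δ : PTree)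
    (hval : Valid base R Γ Δ) (hnn : NonNormal Δ) :
    ∃ σ A, IsTmcs Δ σ A ∧
      ¬ ∃ σ' A', IsCutSeg Δ σ' A' ∧ GForm.meas A' = GForm.meas A ∧ RightRel Δ σ σ' :=
  topmost_rightmost_maximal_cut_segment_exists_general Δ hnn

end

end Grounding
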